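/- Let f(x) = x² − x − 3 and let F be the two-dimensional rational map F(x,y) = (x′,y′) with x′ = x + 2y²(−x² + x + y²)/((x−1−y)(x²−1+y−y²)) and y′ = y²(x−1+y)/((x−1−y)(x²−1+y−y²)). Then F is semi-conjugate to f through Ψ(x,y) = (x² − 1 − xy − 2y²)/y: for all (x,y) ∈ ℝ² with y ≠ 0, x−1+y ≠ 0 and (x−1−y)(x²−1+y−y²) ≠ 0 one has Ψ(F(x,y)) = f(Ψ(x,y)). -/

import Mathlib

/-- The quadratic polynomial `f(x) = x² - x - 3`. -/
noncomputable def hanoiF (x : ℝ) : ℝ := x ^ 2 - x - 3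

/-- The two-dimensional rational map `F(x,y) = (x', y')`. -/
noncomputable def hanoiMap (p : ℝ × ℝ) : ℝ × ℝ :=
  (p.1 + 2 * p.2 ^ 2 * (-p.1 ^ 2 + p.1 + p.2 ^ 2) /
      ((p.1 - 1 - p.2) * (p.1 ^ 2 - 1 + p.2 - p.2 ^ 2)),
   p.2 ^ 2 * (p.1 - 1 + p.2) /
      ((p.1 - 1 - p.2) * (p.1 ^ 2 - 1 + p.2 - p.2 ^ 2)))

/-- The semi-conjugating map `Ψ(x,y) = (x² - 1 - xy - 2y²)/y`. -/
noncomputable def hanoiPsi (x y : ℝ) : ℝ := (x ^ 2 - 1 - x * y - 2 * y ^ 2) / y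

/-!
Both coordinates of `F` share the denominator `D = (x - 1 - y)(x² - 1 + y - y²)`; writing
`F = (X/D, Y/D)` with polynomials `X`, `Y`, one gets `Ψ ∘ F = ((X - 2Y)(X + Y) - D²)/(Y D)`.
The whole statement then rests on one polynomial identity: that numerator equals
`y² f(Ψ(x,y)) · (x - 1 + y) · D`, and `Y = y² (x - 1 + y)`, so the factors `(x - 1 + y) D` cancel.
-/

theorem hanoiPsi_div_div (X Y D : ℝ) (hD : D ≠ 0) :
    hanoiPsi (X / D) (Y / D) = ((X - 2 * Y) * (X + Y) - D ^ 2) / (Y * D) := by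
  unfold hanoiPsi
  rcases eq_or_ne Y 0 with rfl | hY
  · simp
  · field_simp
    ring

theorem hanoiF_hanoiPsi (x y : ℝ) (hy : y ≠ 0) :
    hanoiF (hanoiPsi x y) =
      ((x ^ 2 - 1 - x * y - 2 * y ^ 2) ^ 2 - (x ^ 2 - 1 - x * y - 2 * y ^ 2) * y - 3 * y ^ 2)
        / y ^ 2 := by
  unfold hanoiF hanoiPsi
  field_simp

theorem hanoiMap_eq_div (x y : ℝ) (hD : (x - 1 - y) * (x ^ 2 - 1 + y - y ^ 2) ≠ 0) :
    hanoiMap (x, y) =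
      ((x * ((x - 1 - y) * (x ^ 2 - 1 + y - y ^ 2)) + 2 * y ^ 2 * (-x ^ 2 + x + y ^ 2)) /
          ((x - 1 - y) * (x ^ 2 - 1 + y - y ^ 2)),
        y ^ 2 * (x - 1 + y) / ((x - 1 - y) * (x ^ 2 - 1 + y - y ^ 2))) := by
  rw [hanoiMap, add_div, mul_div_cancel_right₀ x hD]

theorem hanoi_semiconj_polynomial_identity {R : Type*} [CommRing R] (x y : R) :
    let D := (x - 1 - y) * (x ^ 2 - 1 + y - y ^ 2)
    let X := x * D + 2 * y ^ 2 * (-x ^ 2 + x + y ^ 2)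
    let Y := y ^ 2 * (x - 1 + y)
    let N := x ^ 2 - 1 - x * y - 2 * y ^ 2
    (X - 2 * Y) * (X + Y) - D ^ 2 = (N ^ 2 - N * y - 3 * y ^ 2) * (x - 1 + y) * D := by
  intro D X Y N
  ring

theorem psi_semiconjugates_F_to_f (x y : ℝ) (hy : y ≠ 0) (hA : x - 1 + y ≠ 0)
    (hLK : (x - 1 - y) * (x ^ 2 - 1 + y - y ^ 2) ≠ 0) :
    hanoiPsi (hanoiMap (x, y)).1 (hanoiMap (x, y)).2 = hanoiF (hanoiPsi x y) := by
  have key := hanoi_semiconj_polynomial_identity x y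
  dsimp only at key
  rw [hanoiMap_eq_div x y hLK, hanoiPsi_div_div _ _ _ hLK, key, hanoiF_hanoiPsi x y hy,
    mul_div_mul_right _ _ hLK, mul_div_mul_right _ _ hA]
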